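/- Let i be a purely imaginary unit quaternion and let q = x + I y with x, y real and I a purely imaginary unit quaternion. Then for every nonnegative integer n, (1/2)(1 + I i)(x - i y)^n + (1/2)(1 - I i)(x + i y)^n = q^n, i.e., the representation formula holds for the monomial q -> q^n. -/
import Mathlib

open Quaternion

lemma my_sq_neg_one (J : Quaternion ℝ) (h1 : J.re = 0) (h2 : ‖J‖ = 1) :
    J * J = -1 := by
  have h := (Quaternion.sq_eq_neg_normSq (a := J)).2 h1
  rw [sq] at h
  rw [h, Quaternion.normSq_eq_norm_mul_self, h2]
  norm_num

lemma my_pow_eq (x y : ℝ) (n : ℕ) :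
    ∃ a b : ℝ, ∀ J : Quaternion ℝ, J * J = -1 →
      ((x : Quaternion ℝ) + y • J) ^ n = (a : Quaternion ℝ) + b • J := by
  induction n with
  | zero => exact ⟨1, 0, fun J _ => by simp⟩
  | succ n ih =>
    obtain ⟨a, b, hab⟩ := ih
    refine ⟨a * x - b * y, a * y + b * x, fun J hJ => ?_⟩
    rw [pow_succ, hab J hJ]
    have hone : ((a * x - b * y : ℝ) : Quaternion ℝ)
        = ((a * x : ℝ) : Quaternion ℝ) - ((b * y : ℝ) : Quaternion ℝ) := by push_cast; ring
    rw [add_mul, mul_add, mul_add, ← Quaternion.coe_mul,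
      mul_smul_comm y ((a : Quaternion ℝ)) J, Quaternion.coe_mul_eq_smul, smul_smul,
      smul_mul_assoc, Quaternion.mul_coe_eq_smul, smul_smul,
      smul_mul_smul_comm, hJ, hone, add_smul, mul_comm y a]
    have hbo : (b * y) • (-1 : Quaternion ℝ) = -((b * y : ℝ) : Quaternion ℝ) := by
      rw [← Quaternion.coe_one, smul_neg, Quaternion.smul_coe, mul_one]
    rw [hbo]
    abel

theorem representation_formula_monomial
    (i I : Quaternion ℝ) (hire : i.re = 0) (hinorm : ‖i‖ = 1)
    (hIre : I.re = 0) (hInorm : ‖I‖ = 1)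
    (x y : ℝ) (q : Quaternion ℝ) (hq : q = (x : Quaternion ℝ) + y • I) (n : ℕ) :
    (1/2 : ℝ) • ((1 + I * i) * ((x : Quaternion ℝ) - y • i) ^ n)
      + (1/2 : ℝ) • ((1 - I * i) * ((x : Quaternion ℝ) + y • i) ^ n) = q ^ n := by
  have hii : i * i = -1 := my_sq_neg_one i hire hinorm
  have hII : I * I = -1 := my_sq_neg_one I hIre hInorm
  obtain ⟨a, b, hab⟩ := my_pow_eq x y n
  have hni : (i : Quaternion ℝ) * (i) = -1 := hii
  have hneg : (-i) * (-i) = -1 := by rw [neg_mul_neg, hii]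
  have h1 : ((x : Quaternion ℝ) - y • i) ^ n = (a : Quaternion ℝ) - b • i := by
    have := hab (-i) hneg
    rw [smul_neg] at this
    rw [← sub_eq_add_neg] at this
    rw [this, smul_neg, sub_eq_add_neg]
  have h2 : ((x : Quaternion ℝ) + y • i) ^ n = (a : Quaternion ℝ) + b • i := hab i hii
  have h3 : q ^ n = (a : Quaternion ℝ) + b • I := by rw [hq]; exact hab I hII
  rw [h1, h2, h3]
  have e1 : (1 + I * i) * ((a : Quaternion ℝ) - b • i)
      = a • (1 + I * i) - b • (i - I) := by
    have : (1 + I * i) * i = i - I := by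
      rw [add_mul, one_mul, mul_assoc, hii, mul_neg_one, ← sub_eq_add_neg]
    rw [mul_sub, mul_smul_comm, this, Quaternion.mul_coe_eq_smul]
  have e2 : (1 - I * i) * ((a : Quaternion ℝ) + b • i)
      = a • (1 - I * i) + b • (i + I) := by
    have : (1 - I * i) * i = i + I := by
      rw [sub_mul, one_mul, mul_assoc, hii, mul_neg_one, sub_neg_eq_add]
    rw [mul_add, mul_smul_comm, this, Quaternion.mul_coe_eq_smul]
  rw [e1, e2]
  have : (a : Quaternion ℝ) = a • (1 : Quaternion ℝ) := by rw [← Quaternion.coe_one, Quaternion.smul_coe, mul_one]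
  rw [this]
  module
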